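/- Let q ≥ 3 and n ≥ 2, and let (T⁺, T⁻) be a pair of disjoint subsets of V(H(n,q)) with T⁺ ∪ T⁻ nonempty that satisfies the spectral definition of extended perfect bitrade (Definition 4). Then n ≡ 2 (mod q), i.e., n = lq + 2 for some nonnegative integer l. -/

import Mathlib

open Finset

/-- Vertex set of the Hamming graph `H(n,q)`: `q`-ary words of length `n`. -/
abbrev HV (n q : ℕ) : Type := Fin n → ZMod q

/-- The radius-`r` sphere around `x` in `H(n,q)`. -/
def hSphere {n q : ℕ} (x : HV n q) (r : ℕ) : Set (HV n q) := {y | hammingDist x y = r}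

/-- The radius-1 ball around `x` in `H(n,q)`. -/
def hBall {n q : ℕ} (x : HV n q) : Set (HV n q) := {z | hammingDist x z ≤ 1}

/-- A code `C` has code distance at least `d`. -/
def minDistGe {n q : ℕ} (C : Set (HV n q)) (d : ℕ) : Prop :=
  ∀ x ∈ C, ∀ y ∈ C, x ≠ y → d ≤ hammingDist x y

/-- A pair of disjoint sets is a perfect bitrade in `H(n,q)` if every radius-1 ball
meets both parts in the same number (at most 1) of vertices. -/
def isPerfectBitrade {n q : ℕ} (Tp Tm : Set (HV n q)) : Prop :=
  Disjoint Tp Tm ∧ ∀ x : HV n q,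
    (hBall x ∩ Tp).ncard = (hBall x ∩ Tm).ncard ∧ (hBall x ∩ Tp).ncard ≤ 1

/-- The weight of a vertex `x` with respect to a set `A`:
`|S₀(x) ∩ A| + |S₁(x) ∩ A| + (2/n)·|S₂(x) ∩ A|`. -/
noncomputable def wt {n q : ℕ} (A : Set (HV n q)) (x : HV n q) : ℚ :=
  ((hSphere x 0 ∩ A).ncard : ℚ) + ((hSphere x 1 ∩ A).ncard : ℚ)
    + (2 / (n : ℚ)) * ((hSphere x 2 ∩ A).ncard : ℚ)

/-- Definition 3 (weight definition of extended perfect bitrade). -/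
def weightBitrade {n q : ℕ} (Tp Tm : Set (HV n q)) : Prop :=
  Disjoint Tp Tm ∧ ∀ x : HV n q, wt Tp x = wt Tm x ∧ wt Tp x ≤ 1

/-- 0-1 indicator function of a set of vertices. -/
noncomputable def chi {n q : ℕ} (T : Set (HV n q)) (x : HV n q) : ℝ :=
  Set.indicator T (fun _ => (1 : ℝ)) x

/-- The adjacency operator of `H(n,q)`: sum of `f` over the neighbours of `x`. -/
def nbrSum {n q : ℕ} [NeZero q] {R : Type*} [AddCommMonoid R]
    (f : HV n q → R) (x : HV n q) : R :=
  ∑ y ∈ Finset.univ.filter (fun y => hammingDist x y = 1), f y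

/-- The `i`-projection of a code `C ⊆ V(H(m+1,q))`. -/
def proj {m q : ℕ} (i : Fin (m + 1)) (C : Set (HV (m + 1) q)) : Set (HV m q) :=
  {x | ∃ a : ZMod q, i.insertNth a x ∈ C}

/-- Definition 2 (projection definition of extended perfect bitrade). -/
def projBitrade {m q : ℕ} (Tp Tm : Set (HV (m + 1) q)) : Prop :=
  minDistGe Tp 4 ∧ minDistGe Tm 4 ∧
    ∀ i : Fin (m + 1),
      isPerfectBitrade (proj i Tp \ proj i Tm) (proj i Tm \ proj i Tp)

/-- `f *ᵢ ψ`, where `ψ ≡ 1`: the function `x ↦ ∑ₐ f(xᵃᵢ)` on `H(m,q)`. -/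
noncomputable def projFun {m q : ℕ} [NeZero q] (i : Fin (m + 1)) (f : HV (m + 1) q → ℂ)
    (x : HV m q) : ℂ :=
  ∑ a : ZMod q, f (i.insertNth a x)

/-- The cylinder `C_{x,i} = ⋃ₐ B(x + a·eᵢ)`. -/
def cylinder {n q : ℕ} (x : HV n q) (i : Fin n) : Set (HV n q) :=
  ⋃ a : ZMod q, hBall (Function.update x i (x i + a))

/-- Definition 5 (cylinder definition of extended perfect bitrade). -/
def cylBitrade {n q : ℕ} (Tp Tm : Set (HV n q)) : Prop :=
  ∀ (x : HV n q) (i : Fin n),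
    (cylinder x i ∩ Tp).ncard = (cylinder x i ∩ Tm).ncard ∧
      (cylinder x i ∩ Tp).ncard ≤ 1

/-- The matrix `S` from Definition 1. -/
noncomputable def Smat (n q : ℕ) : Matrix (Fin 3) (Fin 3) ℝ :=
  !![0, (n : ℝ) * ((q : ℝ) - 1), 0;
     1, (q : ℝ) - 2, ((n : ℝ) - 1) * ((q : ℝ) - 1);
     0, (n : ℝ), (n : ℝ) * ((q : ℝ) - 2)]

/-- Definition 1 (matrix definition of extended perfect bitrade), existence of the
matrix `F` with the required properties. -/
def matrixBitrade {n q : ℕ} [NeZero q] (Tp Tm : Set (HV n q)) : Prop :=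
  ∃ F : HV n q → Fin 3 → ℝ,
    (∀ x, F x 0 = chi Tp x - chi Tm x) ∧
    (∀ x, ∑ k : Fin 3, F x k = 0) ∧
    (∀ x, ({k : Fin 3 | F x k ≠ 0}).ncard ≤ 2) ∧
    (∀ (x : HV n q) (j : Fin 3),
      nbrSum (fun y => F y j) x = ∑ k : Fin 3, F x k * Smat n q k j)

/-- Definition 4 (spectral definition of extended perfect bitrade). -/
def spectralBitrade {n q : ℕ} [NeZero q] (Tp Tm : Set (HV n q)) : Prop :=
  minDistGe Tp 4 ∧ minDistGe Tm 4 ∧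
    ∃ g h : HV n q → ℝ,
      (∀ x, chi Tp x - chi Tm x = g x + h x) ∧
      (∀ x, nbrSum g x = -(n : ℝ) * g x) ∧
      (∀ x, nbrSum h x = ((q : ℝ) - 2) * h x)

/-!
Write `f = χ_{T⁺} − χ_{T⁻} = g + h`. The adjacency operator is `A = ∑ᵢ Lᵢ − n`, where `Lᵢ` sums
along the lines in direction `i`. The characters `ψ` of `(ZMod q)ⁿ` form a basis of eigenvectors of
every `Lᵢ`: `Lᵢ ψ` is `q ψ` or `0` according as `ψ` is trivial on the `i`-th axis or not, so
`A ψ = (q k − n) ψ` with `k` the number of axes on which `ψ` is trivial. If `n ≢ 2 (mod q)`, then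
`q − 2` is not of this form, so `h = 0`; and a character with eigenvalue `−n` is trivial on no axis,
so `f = g` sums to zero along every line. Hence every line through a vertex of `T⁺` meets `T⁻`, and
two such lines in different directions give two vertices of `T⁻` at distance at most `2`.
-/

open Function

section Hamming

variable {ι : Type*} [Fintype ι] [DecidableEq ι] {β : ι → Type*} [∀ i, DecidableEq (β i)]

theorem hammingDist_update_le (x : ∀ i, β i) (i : ι) (a : β i) :
    hammingDist x (update x i a) ≤ 1 := by
  refine (card_le_card fun j hj => ?_).trans (card_singleton i).le
  by_contra hji
  simp_all [update_of_ne (Finset.mem_singleton.not.mp hji)]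

theorem hammingDist_update_of_ne {x : ∀ i, β i} {i : ι} {a : β i} (ha : a ≠ x i) :
    hammingDist x (update x i a) = 1 :=
  (hammingDist_update_le x i a).antisymm <| hammingDist_pos.mpr fun h => ha <| by
    simpa using (congr_fun h i).symm

theorem exists_update_eq_of_hammingDist_eq_one {x y : ∀ i, β i} (h : hammingDist x y = 1) :
    ∃ i, y i ≠ x i ∧ update x i (y i) = y := by
  obtain ⟨i, hi⟩ := card_eq_one.mp h
  have hdiff : ∀ j, x j ≠ y j ↔ j = i := fun j => by
    simpa using congr_arg (j ∈ ·) hi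
  refine ⟨i, Ne.symm ((hdiff i).mpr rfl), funext fun j => ?_⟩
  rcases eq_or_ne j i with rfl | hj
  · simp
  · rw [update_of_ne hj]
    simpa using (hdiff j).not.mpr hj

end Hamming

section HammingGraph

variable {n q : ℕ} [NeZero q]

def lineSum {R : Type*} [AddCommMonoid R] (i : Fin n) (f : HV n q → R) (x : HV n q) : R :=
  ∑ a : ZMod q, f (update x i a)

theorem nbrSum_eq_sum_sum_erase {R : Type*} [AddCommMonoid R] (f : HV n q → R) (x : HV n q) :
    nbrSum f x = ∑ i, ∑ a ∈ univ.erase (x i), f (update x i a) := by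
  rw [nbrSum, ← sum_sigma univ (fun i => univ.erase (x i)) fun p => f (update x p.1 p.2)]
  refine (sum_bij (fun p _ => update x p.1 p.2) ?_ ?_ ?_ fun _ _ => rfl).symm
  · rintro ⟨i, a⟩ hp
    simpa using hammingDist_update_of_ne (mem_erase.mp (mem_sigma.mp hp).2).1
  · rintro ⟨i, a⟩ hp ⟨j, b⟩ - hpq
    obtain rfl : i = j := by
      by_contra hij
      have hpi := congr_fun hpq i
      simp only [update_self, update_of_ne hij] at hpi
      exact (mem_erase.mp (mem_sigma.mp hp).2).1 hpi
    simpa using congr_fun hpq i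
  · intro y hy
    obtain ⟨i, hi, hiy⟩ := exists_update_eq_of_hammingDist_eq_one (mem_filter.mp hy).2
    exact ⟨⟨i, y i⟩, by simpa using hi, hiy⟩

theorem nbrSum_eq_sum_lineSum_sub {R : Type*} [AddCommGroup R] (f : HV n q → R) (x : HV n q) :
    nbrSum f x = ∑ i, lineSum i f x - n • f x := by
  have hline (i : Fin n) : lineSum i f x = ∑ a ∈ univ.erase (x i), f (update x i a) + f x := by
    rw [lineSum, ← sum_erase_add _ _ (mem_univ (x i)), update_eq_self]
  simp [nbrSum_eq_sum_sum_erase, hline]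

def coordChar (ψ : AddChar (HV n q) ℂ) (i : Fin n) : AddChar (ZMod q) ℂ :=
  ψ.compAddMonoidHom (AddMonoidHom.single (fun _ : Fin n => ZMod q) i)

open Classical in
noncomputable def adjEigenvalue (ψ : AddChar (HV n q) ℂ) : ℂ :=
  q * #{i | coordChar ψ i = 0} - n

theorem lineSum_addChar (ψ : AddChar (HV n q) ℂ) (i : Fin n) [Decidable (coordChar ψ i = 0)]
    (x : HV n q) :
    lineSum i ψ x = if coordChar ψ i = 0 then q * ψ x else 0 := by
  have hupd (a : ZMod q) : ψ (update x i a) = ψ x * coordChar ψ i (a - x i) := by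
    rw [coordChar, AddChar.compAddMonoidHom_apply, AddMonoidHom.single_apply,
      ← AddChar.map_add_eq_mul]
    congr 1
    ext j
    rcases eq_or_ne j i with rfl | hj <;> simp [*]
  simp only [lineSum, hupd, ← mul_sum]
  have hshift : ∑ a, coordChar ψ i (a - x i) = ∑ a, coordChar ψ i a :=
    Fintype.sum_equiv (Equiv.subRight (x i)) _ _ fun _ => rfl
  rw [hshift, AddChar.sum_eq_ite, ZMod.card]
  split_ifs <;> ring

theorem nbrSum_addChar (ψ : AddChar (HV n q) ℂ) (x : HV n q) :
    nbrSum ψ x = adjEigenvalue ψ * ψ x := by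
  classical
  simp only [nbrSum_eq_sum_lineSum_sub, lineSum_addChar, sum_ite, sum_const_zero, sum_const,
    adjEigenvalue, nsmul_eq_mul]
  ring

theorem nbrSum_sum_smul {ι R : Type*} [Semiring R] (s : Finset ι) (c : ι → R)
    (f : ι → HV n q → R) (x : HV n q) :
    nbrSum (∑ j ∈ s, c j • f j) x = ∑ j ∈ s, c j * nbrSum (f j) x := by
  simp only [nbrSum, Finset.sum_apply, Pi.smul_apply, smul_eq_mul, mul_sum]
  exact sum_comm

theorem lineSum_sum_smul {ι R : Type*} [Semiring R] (i : Fin n) (s : Finset ι) (c : ι → R)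
    (f : ι → HV n q → R) (x : HV n q) :
    lineSum i (∑ j ∈ s, c j • f j) x = ∑ j ∈ s, c j * lineSum i (f j) x := by
  simp only [lineSum, Finset.sum_apply, Pi.smul_apply, smul_eq_mul, mul_sum]
  exact sum_comm

noncomputable def charCoeff (F : HV n q → ℂ) (ψ : AddChar (HV n q) ℂ) : ℂ :=
  (AddChar.complexBasis (HV n q)).repr F ψ

theorem sum_charCoeff_smul (F : HV n q → ℂ) : ∑ ψ, charCoeff F ψ • ⇑ψ = F := by
  simpa [charCoeff] using (AddChar.complexBasis (HV n q)).sum_repr F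

theorem charCoeff_sum_smul (c : AddChar (HV n q) ℂ → ℂ) : charCoeff (∑ ψ, c ψ • ⇑ψ) = c := by
  have h := (AddChar.complexBasis (HV n q)).repr_sum_self c
  simp only [AddChar.complexBasis_apply] at h
  exact funext fun ψ => congr_fun h ψ

theorem charCoeff_eq_zero_of_nbrSum_eq {F : HV n q → ℂ} {μ : ℂ} (hF : ∀ x, nbrSum F x = μ * F x)
    {ψ : AddChar (HV n q) ℂ} (hψ : adjEigenvalue ψ ≠ μ) : charCoeff F ψ = 0 := by
  have hexp : nbrSum F = ∑ φ, (adjEigenvalue φ * charCoeff F φ) • ⇑φ := by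
    ext x
    conv_lhs => rw [← sum_charCoeff_smul F]
    simp only [nbrSum_sum_smul, nbrSum_addChar, Finset.sum_apply, Pi.smul_apply, smul_eq_mul]
    exact sum_congr rfl fun _ _ => by ring
  have hcoeff := congr_fun (charCoeff_sum_smul fun φ => adjEigenvalue φ * charCoeff F φ) ψ
  rw [← hexp, show nbrSum F = μ • F from funext hF] at hcoeff
  simp only [charCoeff, map_smul, Finsupp.smul_apply, smul_eq_mul] at hcoeff
  exact (mul_eq_mul_right_iff.mp hcoeff).resolve_left (Ne.symm hψ)

theorem exists_adjEigenvalue_eq_of_nbrSum_eq {F : HV n q → ℂ} (hF0 : F ≠ 0) {μ : ℂ}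
    (hF : ∀ x, nbrSum F x = μ * F x) : ∃ ψ : AddChar (HV n q) ℂ, adjEigenvalue ψ = μ := by
  by_contra! hμ
  refine hF0 ?_
  rw [← sum_charCoeff_smul F]
  simp [charCoeff_eq_zero_of_nbrSum_eq hF (hμ _)]

theorem lineSum_eq_zero_of_nbrSum_eq_neg {F : HV n q → ℂ} (hF : ∀ x, nbrSum F x = -n * F x)
    (i : Fin n) (x : HV n q) : lineSum i F x = 0 := by
  classical
  rw [← sum_charCoeff_smul F, lineSum_sum_smul]
  refine sum_eq_zero fun ψ _ => ?_
  by_cases hψ : adjEigenvalue ψ = -n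
  · have hi : coordChar ψ i ≠ 0 := by
      intro hi
      have hcard : (#{j | coordChar ψ j = 0} : ℂ) = 0 := by
        simpa [adjEigenvalue, NeZero.ne q] using hψ
      rw [Nat.cast_eq_zero, card_eq_zero, filter_eq_empty_iff] at hcard
      exact hcard (mem_univ i) hi
    simp [lineSum_addChar, hi]
  · simp [charCoeff_eq_zero_of_nbrSum_eq hF hψ]

theorem nbrSum_ofReal (f : HV n q → ℝ) (x : HV n q) :
    nbrSum (fun y => (f y : ℂ)) x = nbrSum f x := by
  simp [nbrSum]

theorem lineSum_ofReal (i : Fin n) (f : HV n q → ℝ) (x : HV n q) :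
    lineSum i (fun y => (f y : ℂ)) x = lineSum i f x := by
  simp [lineSum]

theorem eq_zero_of_nbrSum_eq_sub_two_mul (hn : 2 ≤ n) (hnq : ¬∃ l, n = l * q + 2)
    {h : HV n q → ℝ} (hh : ∀ x, nbrSum h x = (q - 2) * h x) : h = 0 := by
  by_contra h0
  obtain ⟨ψ, hψ⟩ := exists_adjEigenvalue_eq_of_nbrSum_eq (F := fun y => (h y : ℂ)) (μ := q - 2)
    (fun hC => h0 <| funext fun x => by simpa using congr_fun hC x)
    (fun x => by simp [nbrSum_ofReal, hh])
  obtain ⟨k, hk⟩ : ∃ k : ℕ, (q * k - n : ℂ) = q - 2 := ⟨_, hψ⟩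
  replace hk : q * k + 2 = n + q := by
    have : ((q * k + 2 : ℕ) : ℂ) = (n + q : ℕ) := by
      push_cast
      linear_combination hk
    exact_mod_cast this
  obtain _ | l := k
  · linarith [NeZero.pos q]
  · exact hnq ⟨l, by linarith⟩

theorem lineSum_eq_zero_of_nbrSum_eq_neg_real {g : HV n q → ℝ} (hg : ∀ x, nbrSum g x = -n * g x)
    (i : Fin n) (x : HV n q) : lineSum i g x = 0 := by
  have hgC := lineSum_eq_zero_of_nbrSum_eq_neg (F := fun y => (g y : ℂ))
    (fun y => by simp [nbrSum_ofReal, hg]) i x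
  rwa [lineSum_ofReal, Complex.ofReal_eq_zero] at hgC

theorem exists_update_mem_of_lineSum_chi_eq {Tp Tm : Set (HV n q)} {v : HV n q} (hv : v ∈ Tp)
    {i : Fin n} (hi : lineSum i (chi Tp) v = lineSum i (chi Tm) v) :
    ∃ a, update v i a ∈ Tm := by
  have hpos : 0 < lineSum i (chi Tm) v := by
    rw [← hi]
    have hle := single_le_sum (f := fun a => chi Tp (update v i a))
      (fun _ _ => Set.indicator_nonneg (fun _ _ => zero_le_one) _) (mem_univ (v i))
    simp only [update_eq_self, chi, Set.indicator_of_mem hv] at hle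
    exact one_pos.trans_le hle
  obtain ⟨a, -, ha⟩ := exists_ne_zero_of_sum_ne_zero hpos.ne'
  exact ⟨a, by_contra fun h => ha (Set.indicator_of_notMem h _)⟩

theorem eq_empty_of_lineSum_chi_eq (hn : 2 ≤ n) {Tp Tm : Set (HV n q)} (hdisj : Disjoint Tp Tm)
    (hTm : minDistGe Tm 4) (hline : ∀ i x, lineSum i (chi Tp) x = lineSum i (chi Tm) x) :
    Tp = ∅ := by
  refine Set.eq_empty_of_forall_notMem fun v hv => ?_
  have hnbr (i : Fin n) : ∃ a, a ≠ v i ∧ update v i a ∈ Tm := by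
    obtain ⟨a, ha⟩ := exists_update_mem_of_lineSum_chi_eq hv (hline i v)
    refine ⟨a, fun hav => Set.disjoint_left.mp hdisj hv ?_, ha⟩
    rwa [hav, update_eq_self] at ha
  obtain ⟨i, j, hij⟩ : ∃ i j : Fin n, i ≠ j := ⟨⟨0, by omega⟩, ⟨1, by omega⟩, by simp⟩
  obtain ⟨a, -, ha⟩ := hnbr i
  obtain ⟨b, hb, hb'⟩ := hnbr j
  have hab : update v i a ≠ update v j b := fun h => hb <| by
    simpa [update_of_ne hij.symm] using (congr_fun h j).symm
  have h4 := hTm _ ha _ hb' hab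
  have h2 := hammingDist_triangle (update v i a) v (update v j b)
  rw [hammingDist_comm (update v i a) v] at h2
  linarith [hammingDist_update_le v i a, hammingDist_update_le v j b]

end HammingGraph

theorem stmt18_general (q n : ℕ) [NeZero q] (hn : 2 ≤ n)
    (Tp Tm : Set (HV n q)) (hdisj : Disjoint Tp Tm) (hne : (Tp ∪ Tm).Nonempty)
    (h : spectralBitrade Tp Tm) :
    ∃ l : ℕ, n = l * q + 2 := by
  obtain ⟨hTp, hTm, g, h, hf, hg, hh⟩ := h
  by_contra hnq
  have hh0 : h = 0 := eq_zero_of_nbrSum_eq_sub_two_mul hn hnq hh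
  have hline (i : Fin n) (x : HV n q) : lineSum i (chi Tp) x = lineSum i (chi Tm) x := by
    rw [← sub_eq_zero, ← lineSum_eq_zero_of_nbrSum_eq_neg_real hg i x, lineSum, lineSum, lineSum,
      ← sum_sub_distrib]
    simp [hf, hh0]
  obtain ⟨v, hv | hv⟩ := hne
  · simp [eq_empty_of_lineSum_chi_eq hn hdisj hTm hline] at hv
  · simp [eq_empty_of_lineSum_chi_eq hn hdisj.symm hTp fun i x => (hline i x).symm] at hv

/-- a nonempty extended perfect bitrade (spectral definition) forces
`n = l·q + 2` for some nonnegative integer `l`. -/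
theorem stmt18 (q n : ℕ) [NeZero q] (hq : 3 ≤ q) (hn : 2 ≤ n)
    (Tp Tm : Set (HV n q)) (hdisj : Disjoint Tp Tm) (hne : (Tp ∪ Tm).Nonempty)
    (h : spectralBitrade Tp Tm) :
    ∃ l : ℕ, n = l * q + 2 :=
  stmt18_general q n hn Tp Tm hdisj hne h
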